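/- arXiv:1702.08127 — 2 statements merged into one kernel-verified Lean document; each statement's English description precedes it below -/
import Mathlib

section
/- Let α be a real number with 0 < α < π. Then F(1,α) = 1, and for every real η with 0 < η < 1, one has −2α(2π−α)/(α² + (2π−α)²) < F(η,α) < 1. -/
/-!
With `γ = π - α`, the product-to-sum formulas give `sin(αη) sin((2π-α)η) = sin²(πη) - sin²(γη)`
and `cos(αη) cos((2π-α)η) - 1 = -(sin²(πη) + sin²(γη))`, so
`F(η, α) = (t² - s²) / (t² + s²)` with `t = sin(γη)`, `s = sin(πη)`, and the lower bound equals
`(γ² - π²) / (γ² + π²)`. The map `(u, v) ↦ (u² - v²) / (u² + v²)` only depends on `u / v` and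
increases with it. At `η = 1` we have `s = 0`, hence `F = 1`; for `0 < η < 1` we have `s ≠ 0`, hence
`F < 1`, and `t / s > γ / π` because `x ↦ sin x / x` is strictly decreasing on `(0, π]`.
-/

open Real

/-- The dispersion function of the transmission problem at a corner of opening `α`. -/
noncomputable def F (η α : ℝ) : ℝ :=
  Real.sin (α * η) * Real.sin ((2 * Real.pi - α) * η) /
    (Real.cos (α * η) * Real.cos ((2 * Real.pi - α) * η) - 1)

lemma sin_div_lt_sin_div {x y : ℝ} (hx : 0 < x) (hxy : x < y) (hy : y ≤ π) :
    sin y / y < sin x / x := by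
  have hmem : ∀ {z : ℝ}, 0 ≤ z → z ≤ π → z ∈ Set.Icc 0 π := fun h0 h1 => ⟨h0, h1⟩
  simpa using strictConcaveOn_sin_Icc.secant_strict_mono (hmem le_rfl pi_pos.le)
    (hmem hx.le (hxy.trans_le hy).le) (hmem (hx.trans hxy).le hy) hx.ne' (hx.trans hxy).ne' hxy

lemma sq_sub_sq_div_sq_add_sq_lt_one {a b : ℝ} (hb : b ≠ 0) :
    (a ^ 2 - b ^ 2) / (a ^ 2 + b ^ 2) < 1 := by
  have hb2 : 0 < b ^ 2 := by positivity
  rw [div_lt_one (by positivity)]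
  linarith

lemma sq_sub_sq_div_sq_add_sq_lt {a b c d : ℝ} (ha : 0 ≤ a) (hb : 0 < b) (hd : 0 < d)
    (h : a * d < c * b) :
    (a ^ 2 - b ^ 2) / (a ^ 2 + b ^ 2) < (c ^ 2 - d ^ 2) / (c ^ 2 + d ^ 2) := by
  have hsq : (a * d) ^ 2 < (c * b) ^ 2 := pow_lt_pow_left₀ h (by positivity) two_ne_zero
  rw [div_lt_div_iff₀ (by positivity) (by positivity)]
  nlinarith

lemma F_eq (η α : ℝ) :
    F η α = (sin ((π - α) * η) ^ 2 - sin (π * η) ^ 2) /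
      (sin ((π - α) * η) ^ 2 + sin (π * η) ^ 2) := by
  have hsum : α * η + (2 * π - α) * η = 2 * (π * η) := by ring
  have hdiff : α * η - (2 * π - α) * η = -(2 * ((π - α) * η)) := by ring
  have hcos_add := cos_add (α * η) ((2 * π - α) * η)
  have hcos_sub := cos_sub (α * η) ((2 * π - α) * η)
  rw [hsum, cos_two_mul, cos_sq'] at hcos_add
  rw [hdiff, cos_neg, cos_two_mul, cos_sq'] at hcos_sub
  rw [F, ← neg_div_neg_eq]
  congr 1 <;> linarith

lemma neg_two_mul_div_eq (α : ℝ) :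
    -2 * α * (2 * π - α) / (α ^ 2 + (2 * π - α) ^ 2) =
      ((π - α) ^ 2 - π ^ 2) / ((π - α) ^ 2 + π ^ 2) := by
  rw [← mul_div_mul_left _ ((π - α) ^ 2 + π ^ 2) two_ne_zero]
  ring_nf

theorem dispersion_range
    (α : ℝ) (hα0 : 0 < α) (hαπ : α < Real.pi) :
    F 1 α = 1 ∧
    ∀ η : ℝ, 0 < η → η < 1 →
      -2 * α * (2 * Real.pi - α) / (α ^ 2 + (2 * Real.pi - α) ^ 2) < F η α ∧ F η α < 1 := by
  have hγ : 0 < π - α := sub_pos.2 hαπ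
  refine ⟨?_, fun η hη0 hη1 => ?_⟩
  · have hsin : sin (π - α) ≠ 0 := (sin_pos_of_pos_of_lt_pi hγ (by linarith)).ne'
    rw [F_eq, mul_one, mul_one, sin_pi]
    simpa using div_self (pow_ne_zero 2 hsin)
  have hs : 0 < sin (π * η) :=
    sin_pos_of_pos_of_lt_pi (by positivity) (mul_lt_of_lt_one_right pi_pos hη1)
  have hsinc : sin (π * η) / (π * η) < sin ((π - α) * η) / ((π - α) * η) :=
    sin_div_lt_sin_div (by positivity) (by gcongr; linarith)
      (mul_le_of_le_one_right pi_pos.le hη1.le)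
  rw [div_lt_div_iff₀ (by positivity) (by positivity)] at hsinc
  rw [F_eq, neg_two_mul_div_eq]
  refine ⟨sq_sub_sq_div_sq_add_sq_lt hγ.le pi_pos hs ?_, sq_sub_sq_div_sq_add_sq_lt_one hs.ne'⟩
  nlinarith
end

section
/- Let α be a real number with 0 < α < π, set k₊ = −(2π−α)/α and k₋ = −α/(2π−α), and let k be a real number with k₊ ≤ k ≤ k₋. Then for every real η with 0 < η ≤ 1, F(η,α) ≠ 2k/(k² + 1). -/
open Real

/-!
Write `αη = x - y` and `(2π - α)η = x + y` with `x = πη`, `y = (π - α)η`. The product formulas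
turn `F(η, α)` into `(sin² y - sin² x) / (sin² x + sin² y)`, which increases with `sin y / sin x`.
Strict concavity of `sin` on `[0, π]` gives `sin y > (1 - α/π) sin x`, hence
`F(η, α) > -2α(2π - α) / (α² + (2π - α)²)`. The map `k ↦ 2k / (k² + 1)` takes exactly this value
at `k₊` and at `k₋ = 1 / k₊`, and lies below it in between.
-/

theorem sin_sub_mul_sin_add (x y : ℝ) : sin (x - y) * sin (x + y) = sin x ^ 2 - sin y ^ 2 := by
  rw [sin_sub, sin_add]
  linear_combination sin x ^ 2 * sin_sq_add_cos_sq y - sin y ^ 2 * sin_sq_add_cos_sq x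

theorem cos_sub_mul_cos_add_sub_one (x y : ℝ) :
    cos (x - y) * cos (x + y) - 1 = -(sin x ^ 2 + sin y ^ 2) := by
  rw [cos_sub, cos_add]
  linear_combination cos y ^ 2 * sin_sq_add_cos_sq x + (1 - sin x ^ 2) * sin_sq_add_cos_sq y

theorem F_eq_sin_sq_sub_sin_sq_div (η α : ℝ) :
    F η α = (sin ((π - α) * η) ^ 2 - sin (π * η) ^ 2) /
      (sin (π * η) ^ 2 + sin ((π - α) * η) ^ 2) := by
  have hsub : α * η = π * η - (π - α) * η := by ring
  have hadd : (2 * π - α) * η = π * η + (π - α) * η := by ring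
  rw [F, hsub, hadd, sin_sub_mul_sin_add, cos_sub_mul_cos_add_sub_one, div_neg, ← neg_div,
    neg_sub]

theorem mul_sin_lt_sin_mul {t x : ℝ} (ht0 : 0 < t) (ht1 : t < 1) (hx0 : 0 < x) (hxπ : x ≤ π) :
    t * sin x < sin (t * x) := by
  have h := strictConcaveOn_sin_Icc.2 (Set.left_mem_Icc.2 pi_pos.le) ⟨hx0.le, hxπ⟩ hx0.ne
    (sub_pos.2 ht1) ht0 (sub_add_cancel 1 t)
  simpa using h

theorem neg_two_mul_div_lt_sq_sub_sq_div {a b A B : ℝ} (h0 : 0 ≤ (b - a) * A)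
    (h : (b - a) * A < (a + b) * B) :
    -(2 * a * b) / (a ^ 2 + b ^ 2) < (B ^ 2 - A ^ 2) / (A ^ 2 + B ^ 2) := by
  have hB : B ≠ 0 := by rintro rfl; linarith
  have hab : a ^ 2 + b ^ 2 ≠ 0 := by
    intro h'
    obtain ⟨rfl, rfl⟩ : a = 0 ∧ b = 0 := by constructor <;> nlinarith
    linarith
  rw [div_lt_div_iff₀ (by positivity) (by positivity)]
  -- cross-multiplied, the inequality reads `((b - a) A)² < ((a + b) B)²`
  nlinarith [mul_self_lt_mul_self h0 h]

theorem two_mul_div_sq_add_one_le {a b k : ℝ} (ha : 0 < a) (hb : 0 < b) (hkb : -b / a ≤ k)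
    (hka : k ≤ -a / b) :
    2 * k / (k ^ 2 + 1) ≤ -(2 * a * b) / (a ^ 2 + b ^ 2) := by
  have h₁ : 0 ≤ a * k + b := by have := (div_le_iff₀ ha).1 hkb; linarith
  have h₂ : b * k + a ≤ 0 := by have := (le_div_iff₀ hb).1 hka; linarith
  rw [div_le_div_iff₀ (by positivity) (by positivity)]
  nlinarith [mul_nonpos_of_nonneg_of_nonpos h₁ h₂]

theorem dispersion_unsolvable_inside_critical
    (α : ℝ) (hα0 : 0 < α) (hαπ : α < Real.pi)
    (k : ℝ) (hkp : -(2 * Real.pi - α) / α ≤ k) (hkm : k ≤ -α / (2 * Real.pi - α))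
    (η : ℝ) (hη0 : 0 < η) (hη1 : η ≤ 1) :
    F η α ≠ 2 * k / (k ^ 2 + 1) := by
  have hx0 : 0 < π * η := mul_pos pi_pos hη0
  have hxπ : π * η ≤ π := mul_le_of_le_one_right pi_pos.le hη1
  have hA : 0 ≤ sin (π * η) := sin_nonneg_of_nonneg_of_le_pi hx0.le hxπ
  have hconc : (π - α) / π * sin (π * η) < sin ((π - α) / π * (π * η)) :=
    mul_sin_lt_sin_mul (div_pos (by linarith) pi_pos) ((div_lt_one pi_pos).2 (by linarith)) hx0 hxπ
  have hangle : (π - α) / π * (π * η) = (π - α) * η := by field_simp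
  rw [hangle, div_mul_eq_mul_div, div_lt_iff₀ pi_pos] at hconc
  refine ne_of_gt ?_
  calc 2 * k / (k ^ 2 + 1) ≤ -(2 * α * (2 * π - α)) / (α ^ 2 + (2 * π - α) ^ 2) :=
        two_mul_div_sq_add_one_le hα0 (by linarith) hkp hkm
    _ < _ := neg_two_mul_div_lt_sq_sub_sq_div (mul_nonneg (by linarith) hA) (by linarith)
    _ = F η α := (F_eq_sin_sq_sub_sin_sq_div η α).symm
end
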